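/- Lemma D.1 (uniform convergence of product Gaussian densities). Let a > 1/(2π), and let v : ℕ → ℕ → ℝ and w : ℕ → ℝ satisfy v(n, i) ≥ a for all n, i ∈ ℕ and lim_{n→∞} v(n, i) = w(i) for every i ∈ ℕ. Then the product Gaussian densities converge uniformly both in the argument and in the dimension: for every ε > 0 there exists N ∈ ℕ such that for all n ≥ N, all k ≥ 1 and all x ∈ ℝ^k, |Φ^k_{v(n,·)}(x) − Φ^k_{w}(x)| < ε. -/

import Mathlib

/-!
A factor `φ_u(x)` with `u ≥ a` is at most `c = (2πa)^{-1/2}`, and `c < 1` because `a > 1/(2π)`.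
Hence both products are at most `c^k`, which is below `ε` for all dimensions `k ≥ K`.
In the finitely many dimensions `k < K`, all factors lie in `[0, 1]`, so the difference of the
products is at most the sum of the differences of the factors, and each factor converges
uniformly in `x`: the prefactor `(2πu)^{-1/2}` does not depend on `x`, and
`u ↦ exp (-t/u)` is `1/a`-Lipschitz on `[a, ∞)` uniformly in `t ≥ 0` because `s e^{-s} ≤ 1`.
-/

open Filter Topology

/-- The centered Gaussian density with variance `v`:
`φ_v(x) = (2π v)^{-1/2} · exp(−x² / (2v))`. -/
noncomputable def gaussDensity (v x : ℝ) : ℝ :=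
  (1 / Real.sqrt (2 * Real.pi * v)) * Real.exp (-(x ^ 2) / (2 * v))

/-- The joint density of a `k`-dimensional Gaussian vector with independent zero-mean
entries of variances `u 0, …, u (k−1)`: `Φ^k_u(x) = ∏_{i<k} φ_{u i}(x i)`. -/
noncomputable def prodGaussDensity (u : ℕ → ℝ) {k : ℕ} (x : Fin k → ℝ) : ℝ :=
  ∏ i : Fin k, gaussDensity (u (i : ℕ)) (x i)

open Real Finset

lemma abs_prod_sub_prod_le_sum_abs_sub {ι : Type*} (s : Finset ι) {f g : ι → ℝ}
    (hf : ∀ i ∈ s, |f i| ≤ 1) (hg : ∀ i ∈ s, |g i| ≤ 1) :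
    |∏ i ∈ s, f i - ∏ i ∈ s, g i| ≤ ∑ i ∈ s, |f i - g i| := by
  classical
  induction s using Finset.induction_on with
  | empty => simp
  | insert j s hj ih =>
    rw [prod_insert hj, prod_insert hj, sum_insert hj]
    have hfj := hf j (mem_insert_self j s)
    have hgs : |∏ i ∈ s, g i| ≤ 1 := by
      rw [abs_prod]
      exact prod_le_one (fun _ _ => abs_nonneg _) fun i hi => hg i (mem_insert_of_mem hi)
    have ih' := ih (fun i hi => hf i (mem_insert_of_mem hi)) fun i hi => hg i (mem_insert_of_mem hi)
    calc |f j * ∏ i ∈ s, f i - g j * ∏ i ∈ s, g i|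
        = |f j * (∏ i ∈ s, f i - ∏ i ∈ s, g i) + (f j - g j) * ∏ i ∈ s, g i| := by ring_nf
      _ ≤ |f j| * |∏ i ∈ s, f i - ∏ i ∈ s, g i| + |f j - g j| * |∏ i ∈ s, g i| := by
        rw [← abs_mul, ← abs_mul]; exact abs_add_le _ _
      _ ≤ 1 * ∑ i ∈ s, |f i - g i| + |f j - g j| * 1 := by gcongr
      _ = |f j - g j| + ∑ i ∈ s, |f i - g i| := by ring

lemma gaussDensity_nonneg (v x : ℝ) : 0 ≤ gaussDensity v x := by
  unfold gaussDensity; positivity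

lemma gaussDensity_le_of_le {a u : ℝ} (ha : 0 < a) (hu : a ≤ u) (x : ℝ) :
    gaussDensity u x ≤ 1 / √(2 * π * a) := by
  have hexp : exp (-(x ^ 2) / (2 * u)) ≤ 1 :=
    exp_le_one_iff.2 (div_nonpos_of_nonpos_of_nonneg (by nlinarith [sq_nonneg x]) (by linarith))
  have hpre : 1 / √(2 * π * u) ≤ 1 / √(2 * π * a) :=
    one_div_le_one_div_of_le (by positivity) (sqrt_le_sqrt (by gcongr))
  calc gaussDensity u x ≤ 1 / √(2 * π * u) * 1 :=
        mul_le_mul_of_nonneg_left hexp (by positivity)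
    _ ≤ 1 / √(2 * π * a) := by rwa [mul_one]

lemma one_div_sqrt_two_pi_mul_le_one {a : ℝ} (ha : 1 / (2 * π) ≤ a) : 1 / √(2 * π * a) ≤ 1 := by
  have ha₀ : 0 < a := lt_of_lt_of_le (by positivity) ha
  rw [div_le_one (sqrt_pos.2 (by positivity)), one_le_sqrt]
  exact (div_le_iff₀' (by positivity)).1 ha

lemma one_div_sqrt_two_pi_mul_lt_one {a : ℝ} (ha : 1 / (2 * π) < a) : 1 / √(2 * π * a) < 1 := by
  have ha₀ : 0 < a := lt_trans (by positivity) ha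
  rw [div_lt_one (sqrt_pos.2 (by positivity)), lt_sqrt zero_le_one, one_pow]
  exact (div_lt_iff₀' (by positivity)).1 ha

lemma abs_gaussDensity_le_one {u : ℝ} (hu : 1 / (2 * π) ≤ u) (x : ℝ) : |gaussDensity u x| ≤ 1 := by
  rw [abs_of_nonneg (gaussDensity_nonneg u x)]
  exact (gaussDensity_le_of_le (lt_of_lt_of_le (by positivity) hu) le_rfl x).trans
    (one_div_sqrt_two_pi_mul_le_one hu)

lemma prodGaussDensity_nonneg (u : ℕ → ℝ) {k : ℕ} (x : Fin k → ℝ) :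
    0 ≤ prodGaussDensity u x :=
  prod_nonneg fun _ _ => gaussDensity_nonneg _ _

lemma prodGaussDensity_le_pow {a : ℝ} (ha : 0 < a) {u : ℕ → ℝ} (hu : ∀ i, a ≤ u i) {k : ℕ}
    (x : Fin k → ℝ) : prodGaussDensity u x ≤ (1 / √(2 * π * a)) ^ k := by
  calc prodGaussDensity u x ≤ ∏ _i : Fin k, 1 / √(2 * π * a) :=
        prod_le_prod (fun _ _ => gaussDensity_nonneg _ _) fun i _ =>
          gaussDensity_le_of_le ha (hu i) _
    _ = (1 / √(2 * π * a)) ^ k := by simp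

lemma abs_prodGaussDensity_sub_le_pow {a : ℝ} (ha : 0 < a) {u u' : ℕ → ℝ} (hu : ∀ i, a ≤ u i)
    (hu' : ∀ i, a ≤ u' i) {k : ℕ} (x : Fin k → ℝ) :
    |prodGaussDensity u x - prodGaussDensity u' x| ≤ (1 / √(2 * π * a)) ^ k :=
  abs_sub_le_of_nonneg_of_le (prodGaussDensity_nonneg u x) (prodGaussDensity_le_pow ha hu x)
    (prodGaussDensity_nonneg u' x) (prodGaussDensity_le_pow ha hu' x)

lemma abs_prodGaussDensity_sub_le_sum {u u' : ℕ → ℝ} (hu : ∀ i, 1 / (2 * π) ≤ u i)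
    (hu' : ∀ i, 1 / (2 * π) ≤ u' i) {k : ℕ} (x : Fin k → ℝ) :
    |prodGaussDensity u x - prodGaussDensity u' x| ≤
      ∑ i : Fin k, |gaussDensity (u i) (x i) - gaussDensity (u' i) (x i)| :=
  abs_prod_sub_prod_le_sum_abs_sub _ (fun i _ => abs_gaussDensity_le_one (hu i) _)
    fun i _ => abs_gaussDensity_le_one (hu' i) _

lemma mul_exp_neg_le_one (s : ℝ) : s * exp (-s) ≤ 1 := by
  rw [exp_neg, ← div_eq_mul_inv, div_le_one (exp_pos s)]
  linarith [add_one_le_exp s]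

lemma abs_exp_neg_div_sub_le {a t u u' : ℝ} (ht : 0 ≤ t) (ha : 0 < a) (hu : a ≤ u)
    (hu' : a ≤ u') : |exp (-t / u) - exp (-t / u')| ≤ |u - u'| / a := by
  wlog h : u ≤ u' generalizing u u'
  · rw [abs_sub_comm, abs_sub_comm u]
    exact this hu' hu (le_of_not_ge h)
  have hu0 : 0 < u := ha.trans_le hu
  have hu'0 : 0 < u' := ha.trans_le hu'
  set d := t / u - t / u'
  have hd : d = t / u' * ((u' - u) / u) := by simp only [d]; field_simp
  have hd0 : 0 ≤ d := by rw [hd]; exact mul_nonneg (by positivity) (div_nonneg (by linarith) hu0.le)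
  have hsplit : exp (-t / u) = exp (-t / u') * exp (-d) := by rw [← exp_add]; simp only [d]; ring_nf
  have hle : exp (-t / u) ≤ exp (-t / u') := by
    rw [hsplit]; exact mul_le_of_le_one_right (exp_pos _).le (exp_le_one_iff.2 (by linarith))
  rw [abs_of_nonpos (sub_nonpos.2 hle), abs_of_nonpos (by linarith), neg_sub, neg_sub]
  calc exp (-t / u') - exp (-t / u) = exp (-t / u') * (1 - exp (-d)) := by rw [hsplit]; ring
    _ ≤ exp (-t / u') * d :=
      mul_le_mul_of_nonneg_left (by linarith [add_one_le_exp (-d)]) (exp_pos _).le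
    _ = t / u' * exp (-(t / u')) * ((u' - u) / u) := by rw [hd, neg_div]; ring
    _ ≤ 1 * ((u' - u) / u) :=
      mul_le_mul_of_nonneg_right (mul_exp_neg_le_one _) (div_nonneg (by linarith) hu0.le)
    _ ≤ (u' - u) / a := by rw [one_mul]; gcongr

lemma abs_gaussDensity_sub_le {a u u' : ℝ} (ha : 0 < a) (hu : a ≤ u) (hu' : a ≤ u') (x : ℝ) :
    |gaussDensity u x - gaussDensity u' x| ≤
      |1 / √(2 * π * u) - 1 / √(2 * π * u')| + 1 / √(2 * π * a) * (|u - u'| / a) := by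
  have hexp (v : ℝ) : exp (-(x ^ 2) / (2 * v)) = exp (-(x ^ 2 / 2) / v) := by ring_nf
  have hE : |exp (-(x ^ 2 / 2) / u)| ≤ 1 := by
    rw [abs_of_pos (exp_pos _), exp_le_one_iff]
    exact div_nonpos_of_nonpos_of_nonneg (by nlinarith [sq_nonneg x]) (by linarith)
  have hc' : |1 / √(2 * π * u')| ≤ 1 / √(2 * π * a) := by
    rw [abs_of_nonneg (by positivity)]
    exact one_div_le_one_div_of_le (by positivity) (sqrt_le_sqrt (by gcongr))
  have hE' := abs_exp_neg_div_sub_le (t := x ^ 2 / 2) (by positivity) ha hu hu'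
  unfold gaussDensity
  rw [hexp u, hexp u']
  calc _ = |(1 / √(2 * π * u) - 1 / √(2 * π * u')) * exp (-(x ^ 2 / 2) / u) +
          1 / √(2 * π * u') * (exp (-(x ^ 2 / 2) / u) - exp (-(x ^ 2 / 2) / u'))| := by ring_nf
    _ ≤ _ := by
      refine (abs_add_le _ _).trans (add_le_add ?_ ?_) <;> rw [abs_mul]
      · exact mul_le_of_le_one_right (abs_nonneg _) hE
      · exact mul_le_mul hc' hE' (abs_nonneg _) (by positivity)

theorem tendstoUniformly_gaussDensity {ι : Type*} {l : Filter ι} {u : ι → ℝ} {u₀ : ℝ}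
    (h₀ : 0 < u₀) (hu : Tendsto u l (𝓝 u₀)) :
    TendstoUniformly (fun n => gaussDensity (u n)) (gaussDensity u₀) l := by
  set a := u₀ / 2
  have ha : 0 < a := half_pos h₀
  have hau : ∀ᶠ n in l, a ≤ u n := hu.eventually (eventually_ge_nhds (half_lt_self h₀))
  have hpre : Tendsto (fun n => 1 / √(2 * π * u n)) l (𝓝 (1 / √(2 * π * u₀))) :=
    tendsto_const_nhds.div (hu.const_mul (2 * π)).sqrt (by positivity)
  have hbound : Tendsto (fun n => |1 / √(2 * π * u n) - 1 / √(2 * π * u₀)| +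
      1 / √(2 * π * a) * (|u n - u₀| / a)) l (𝓝 0) := by
    simpa using (hpre.sub_const (1 / √(2 * π * u₀))).abs.add
      (((hu.sub_const u₀).abs.div_const a).const_mul (1 / √(2 * π * a)))
  rw [Metric.tendstoUniformly_iff]
  intro ε hε
  filter_upwards [hau, hbound.eventually (gt_mem_nhds hε)] with n hn hbn x
  rw [dist_comm, dist_eq]
  exact (abs_gaussDensity_sub_le ha hn (half_le_self h₀.le) x).trans_lt hbn

/-- **Lemma D.1 (uniform convergence of product Gaussian densities).**
Let `a > 1/(2π)`, and suppose `v n i ≥ a` for all `n, i` and `v n i → w i` as `n → ∞` for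
every `i`. Then the product Gaussian densities `Φ^k_{v(n,·)}` converge to `Φ^k_w`
uniformly in the argument `x ∈ ℝ^k` and in the dimension `k ≥ 1`. -/
theorem prodGaussDensity_uniform_convergence (a : ℝ) (ha : 1 / (2 * Real.pi) < a)
    (v : ℕ → ℕ → ℝ) (w : ℕ → ℝ)
    (hva : ∀ n i, a ≤ v n i)
    (hconv : ∀ i, Tendsto (fun n => v n i) atTop (𝓝 (w i))) :
    ∀ ε : ℝ, 0 < ε → ∃ N : ℕ, ∀ n : ℕ, N ≤ n → ∀ k : ℕ, 1 ≤ k → ∀ x : Fin k → ℝ,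
      |prodGaussDensity (v n) x - prodGaussDensity w x| < ε := by
  intro ε hε
  have ha₀ : 0 < a := lt_trans (by positivity) ha
  have hw : ∀ i, a ≤ w i := fun i => ge_of_tendsto' (hconv i) (hva · i)
  have hc := one_div_sqrt_two_pi_mul_lt_one ha
  obtain ⟨K, hK⟩ := exists_pow_lt_of_lt_one hε hc
  have hunif : ∀ᶠ n in atTop, ∀ i ∈ range K, ∀ y,
      |gaussDensity (v n i) y - gaussDensity (w i) y| < ε / (K + 1) := by
    refine (eventually_all_finset _).2 fun i _ => ?_
    simpa [dist_comm, dist_eq] using Metric.tendstoUniformly_iff.1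
      (tendstoUniformly_gaussDensity (ha₀.trans_le (hw i)) (hconv i)) _ (by positivity)
  obtain ⟨N, hN⟩ := eventually_atTop.1 hunif
  refine ⟨N, fun n hn k _ x => ?_⟩
  rcases le_or_gt K k with hKk | hkK
  · exact (abs_prodGaussDensity_sub_le_pow ha₀ (hva n) hw x).trans_lt
      ((pow_le_pow_of_le_one (by positivity) hc.le hKk).trans_lt hK)
  · calc |prodGaussDensity (v n) x - prodGaussDensity w x|
        _ ≤ ∑ i : Fin k, |gaussDensity (v n i) (x i) - gaussDensity (w i) (x i)| :=
          abs_prodGaussDensity_sub_le_sum (fun i => ha.le.trans (hva n i))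
            (fun i => ha.le.trans (hw i)) x
        _ ≤ ∑ _i : Fin k, ε / (K + 1) :=
          sum_le_sum fun i _ => (hN n hn i (mem_range.2 (i.2.trans hkK)) (x i)).le
        _ = k * (ε / (K + 1)) := by simp
        _ < (K + 1) * (ε / (K + 1)) := by gcongr; exact_mod_cast Nat.lt_succ_of_lt hkK
        _ = ε := mul_div_cancel₀ _ (by positivity)
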